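/- arXiv:1103.3924 — 2 statements merged into one kernel-verified Lean document; each statement's English description precedes it below -/
import Mathlib

section
/- Let d_f^K be the pseudometric d_f^K(x,y) = min{d_f(x,y), d_f(x,K)+d_f(y,K)} with weight f = a² and K = closed ball B̄(x₀,r). Suppose x ≠ y, x₀ ∉ {x,y}, and x₀ is NOT on any geodesic joining x and y in (ℝ³, d_{a²}). Then there exists r₀ > 0 such that for all 0 < r < r₀, d_{a²}^{B̄(x₀,r)}(x,y) = d_{a²}(x,y). -/
open MeasureTheory Pointwise
open scoped Classical

noncomputable section

/-- Euclidean three-space. -/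
abbrev E3 := EuclideanSpace ℝ (Fin 3)

/-- Weighted geodesic distance: infimum of the `f`-weighted length over Lipschitz
curves `γ : [0,1] → ℝ³` joining `x` and `y`. -/
noncomputable def wdist (f : E3 → ℝ) (x y : E3) : ℝ :=
  sInf { L : ℝ | ∃ γ : ℝ → E3, (∃ K : NNReal, LipschitzWith K γ) ∧ γ 0 = x ∧ γ 1 = y ∧
    L = ∫ s in (0:ℝ)..1, f (γ s) * ‖deriv γ s‖ }

/-- Weighted distance from a point to a set. -/
noncomputable def wdistSet (f : E3 → ℝ) (x : E3) (K : Set E3) : ℝ :=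
  sInf ((fun z => wdist f x z) '' K)

/-- The pseudometric `d_f^K(x,y) = min (d_f x y) (d_f(x,K) + d_f(y,K))`. -/
noncomputable def wdistK (f : E3 → ℝ) (K : Set E3) (x y : E3) : ℝ :=
  min (wdist f x y) (wdistSet f x K + wdistSet f y K)

/-- The pinning term `a`, equal to `b` on `ω` and `1` elsewhere. -/
noncomputable def aFun (b : ℝ) (ω : Set E3) : E3 → ℝ :=
  fun x => if x ∈ ω then b else 1

/-! ### Auxiliary lemmas -/

lemma aFun_sq_le_one {b : ℝ} (hb0 : 0 ≤ b) (hb1 : b ≤ 1) (ω : Set E3) (z : E3) :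
    (aFun b ω z)^2 ≤ 1 := by
  unfold aFun; split <;> nlinarith

/-- The set of admissible weighted lengths of curves from `x` to `y`. -/
def curveSet (f : E3 → ℝ) (x y : E3) : Set ℝ :=
  { L : ℝ | ∃ γ : ℝ → E3, (∃ K : NNReal, LipschitzWith K γ) ∧ γ 0 = x ∧ γ 1 = y ∧
    L = ∫ s in (0:ℝ)..1, f (γ s) * ‖deriv γ s‖ }

lemma wdist_eq (f : E3 → ℝ) (x y : E3) : wdist f x y = sInf (curveSet f x y) := rfl

lemma measurable_integrand (b : ℝ) {ω : Set E3} (hopen : IsOpen ω) (γ : ℝ → E3)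
    (hγ : Continuous γ) :
    Measurable (fun s => (aFun b ω (γ s))^2 * ‖deriv γ s‖) := by
  apply Measurable.mul
  · apply Measurable.pow_const
    unfold aFun
    exact Measurable.ite (hopen.preimage hγ).measurableSet measurable_const measurable_const
  · exact (measurable_deriv γ).norm

lemma integrand_II {b : ℝ} (hb0 : 0 ≤ b) (hb1 : b ≤ 1) {ω : Set E3} (hopen : IsOpen ω)
    {γ : ℝ → E3} {K : NNReal} (hγ : LipschitzWith K γ) (u v : ℝ) :
    IntervalIntegrable (fun s => (aFun b ω (γ s))^2 * ‖deriv γ s‖) volume u v := by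
  have hm := measurable_integrand b hopen γ hγ.continuous
  rw [intervalIntegrable_iff]
  have hfin : IsFiniteMeasure (volume.restrict (Set.uIoc u v)) := by
    constructor
    rw [Measure.restrict_apply_univ]
    exact measure_Ioc_lt_top
  apply (integrable_const (K : ℝ)).mono' hm.aestronglyMeasurable
  filter_upwards with s
  have h1 : ‖deriv γ s‖ ≤ (K : ℝ) := norm_deriv_le_of_lipschitz hγ
  have h2 : (0:ℝ) ≤ (aFun b ω (γ s))^2 := sq_nonneg _
  have h3 : (aFun b ω (γ s))^2 ≤ 1 := aFun_sq_le_one hb0 hb1 ω _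
  rw [Real.norm_eq_abs, abs_mul, abs_of_nonneg h2, abs_norm]
  nlinarith [norm_nonneg (deriv γ s)]

lemma bddBelow_curveSet {f : E3 → ℝ} (hf : ∀ z, 0 ≤ f z) (x y : E3) :
    BddBelow (curveSet f x y) := by
  refine ⟨0, ?_⟩
  rintro L ⟨γ, _, _, _, rfl⟩
  exact intervalIntegral.integral_nonneg (by norm_num)
    (fun u _ => mul_nonneg (hf _) (norm_nonneg _))

lemma line_hasDerivAt (x y : E3) (s : ℝ) :
    HasDerivAt (fun s : ℝ => x + s • (y - x)) (y - x) s := by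
  simpa using ((hasDerivAt_id s).smul_const (y - x)).const_add x

lemma line_lipschitz (x y : E3) :
    LipschitzWith ‖y - x‖₊ (fun s : ℝ => x + s • (y - x)) := by
  apply LipschitzWith.of_dist_le_mul
  intro s t
  rw [dist_eq_norm, Real.dist_eq]
  simp only [add_sub_add_left_eq_sub, ← sub_smul, norm_smul, Real.norm_eq_abs, coe_nnnorm]
  rw [mul_comm]

lemma line_mem (f : E3 → ℝ) (x y : E3) :
    (∫ s in (0:ℝ)..1, f ((fun s : ℝ => x + s • (y - x)) s) *
      ‖deriv (fun s : ℝ => x + s • (y - x)) s‖) ∈ curveSet f x y :=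
  ⟨_, ⟨_, line_lipschitz x y⟩, by simp, by simp, rfl⟩

lemma curveSet_nonempty (f : E3 → ℝ) (x y : E3) : (curveSet f x y).Nonempty :=
  ⟨_, line_mem f x y⟩

lemma wdist_le_dist {b : ℝ} (hb0 : 0 ≤ b) (hb1 : b ≤ 1) {ω : Set E3} (hopen : IsOpen ω)
    (x y : E3) : wdist (fun z => (aFun b ω z)^2) x y ≤ dist x y := by
  rw [wdist_eq]
  refine le_trans (csInf_le (bddBelow_curveSet (fun z => sq_nonneg _) x y)
    (line_mem _ x y)) ?_
  have hder : ∀ s : ℝ, deriv (fun s : ℝ => x + s • (y - x)) s = y - x :=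
    fun s => (line_hasDerivAt x y s).deriv
  have hle : (∫ s in (0:ℝ)..1, (aFun b ω (x + s • (y - x)))^2 *
      ‖deriv (fun s : ℝ => x + s • (y - x)) s‖) ≤ ∫ _ in (0:ℝ)..1, ‖y - x‖ := by
    apply intervalIntegral.integral_mono_on (by norm_num)
    · exact integrand_II hb0 hb1 hopen (line_lipschitz x y) 0 1
    · exact intervalIntegrable_const
    · intro s _
      rw [hder s]
      have := aFun_sq_le_one hb0 hb1 ω (x + s • (y - x))
      nlinarith [norm_nonneg (y - x), sq_nonneg (aFun b ω (x + s • (y - x)))]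
  simp only [intervalIntegral.integral_const, smul_eq_mul, one_mul, sub_zero] at hle
  calc _ ≤ ‖y - x‖ := hle
    _ = dist x y := by rw [dist_eq_norm, norm_sub_rev]

lemma wdist_nonneg {f : E3 → ℝ} (hf : ∀ z, 0 ≤ f z) (x y : E3) : 0 ≤ wdist f x y := by
  rw [wdist_eq]
  refine le_csInf (curveSet_nonempty f x y) ?_
  rintro L ⟨γ, _, _, _, rfl⟩
  exact intervalIntegral.integral_nonneg (by norm_num)
    (fun u _ => mul_nonneg (hf _) (norm_nonneg _))

lemma deriv_comp_affine (γ : ℝ → E3) (c d s : ℝ) (hc : c ≠ 0) :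
    deriv (fun t => γ (c * t + d)) s = c • deriv γ (c * s + d) := by
  by_cases h : DifferentiableAt ℝ γ (c * s + d)
  · have hin : HasDerivAt (fun t : ℝ => c * t + d) c s := by
      simpa using ((hasDerivAt_id s).const_mul c).add_const d
    exact (HasDerivAt.scomp s h.hasDerivAt hin).deriv
  · have h2 : ¬ DifferentiableAt ℝ (fun t => γ (c * t + d)) s := by
      intro hd
      apply h
      have hin : DifferentiableAt ℝ (fun u : ℝ => (u - d) / c) (c * s + d) := by fun_prop
      have hval : ((c * s + d) - d) / c = s := by field_simp; ring
      have hd' : DifferentiableAt ℝ (fun t => γ (c * t + d)) (((c * s + d) - d) / c) := by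
        rw [hval]; exact hd
      have hcomp := DifferentiableAt.comp (c * s + d) hd' hin
      have heq : ((fun t => γ (c * t + d)) ∘ (fun u : ℝ => (u - d) / c)) = γ := by
        funext u; simp only [Function.comp_apply]; field_simp; simp
      rwa [heq] at hcomp
    rw [deriv_zero_of_not_differentiableAt h, deriv_zero_of_not_differentiableAt h2, smul_zero]

lemma norm_deriv_comp_affine (γ : ℝ → E3) (c d s : ℝ) (hc : c ≠ 0) :
    ‖deriv (fun t => γ (c * t + d)) s‖ = |c| * ‖deriv γ (c * s + d)‖ := by
  rw [deriv_comp_affine γ c d s hc, norm_smul, Real.norm_eq_abs]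

lemma wdist_symm_le {f : E3 → ℝ} (hf : ∀ z, 0 ≤ f z) (x y : E3) :
    wdist f x y ≤ wdist f y x := by
  rw [wdist_eq, wdist_eq]
  refine le_csInf (curveSet_nonempty f y x) ?_
  rintro L ⟨γ, ⟨K, hK⟩, h0, h1, rfl⟩
  apply csInf_le (bddBelow_curveSet hf x y)
  have hlipin : LipschitzWith 1 (fun t : ℝ => -1 * t + 1) := by
    apply LipschitzWith.of_dist_le_mul
    intro s t
    rw [Real.dist_eq, Real.dist_eq, NNReal.coe_one, one_mul,
      show (-1*s+1) - (-1*t+1) = -(s - t) by ring, abs_neg]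
  refine ⟨fun t => γ (-1 * t + 1), ⟨K * 1, hK.comp hlipin⟩, by simpa using h1,
    by simpa using h0, ?_⟩
  have hptw : (fun s => f ((fun t => γ (-1 * t + 1)) s) * ‖deriv (fun t => γ (-1 * t + 1)) s‖)
      = fun s => (fun u => f (γ u) * ‖deriv γ u‖) (-1 * s + 1) := by
    funext s
    simp only []
    rw [norm_deriv_comp_affine γ (-1) 1 s (by norm_num)]
    norm_num
  rw [hptw, intervalIntegral.integral_comp_mul_add (fun u => f (γ u) * ‖deriv γ u‖)
    (by norm_num : (-1:ℝ) ≠ 0) 1]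
  norm_num
  rw [intervalIntegral.integral_symm]

lemma wdist_symm {f : E3 → ℝ} (hf : ∀ z, 0 ≤ f z) (x y : E3) :
    wdist f x y = wdist f y x :=
  le_antisymm (wdist_symm_le hf x y) (wdist_symm_le hf y x)

lemma concat_mem {b : ℝ} (hb0 : 0 ≤ b) (hb1 : b ≤ 1) {ω : Set E3} (hopen : IsOpen ω)
    (x z y : E3) {L₁ L₂ : ℝ}
    (h₁ : L₁ ∈ curveSet (fun w => (aFun b ω w)^2) x z)
    (h₂ : L₂ ∈ curveSet (fun w => (aFun b ω w)^2) z y) :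
    L₁ + L₂ ∈ curveSet (fun w => (aFun b ω w)^2) x y := by
  obtain ⟨γ₁, ⟨K₁, hK₁⟩, h10, h11, rfl⟩ := h₁
  obtain ⟨γ₂, ⟨K₂, hK₂⟩, h20, h21, rfl⟩ := h₂
  set f : E3 → ℝ := fun w => (aFun b ω w)^2 with hf
  set γ : ℝ → E3 := fun s => if s ≤ 1/2 then γ₁ (2*s) else γ₂ (2*s - 1) with hγdef
  have hγpos : ∀ s : ℝ, s ≤ 1/2 → γ s = γ₁ (2*s) := fun s hs => if_pos hs
  have hγneg : ∀ s : ℝ, ¬ (s ≤ 1/2) → γ s = γ₂ (2*s - 1) := fun s hs => if_neg hs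
  have hlip : LipschitzWith (2 * max K₁ K₂) γ := by
    apply LipschitzWith.of_dist_le_mul
    have hc : ((2 * max K₁ K₂ : NNReal) : ℝ) = 2 * max (K₁:ℝ) (K₂:ℝ) := by
      push_cast; ring
    have key : ∀ s t : ℝ, s ≤ t →
        dist (γ s) (γ t) ≤ ((2 * max K₁ K₂ : NNReal) : ℝ) * dist s t := by
      intro s t hst
      have hK1le : (K₁ : ℝ) ≤ max (K₁:ℝ) (K₂:ℝ) := le_max_left _ _
      have hK2le : (K₂ : ℝ) ≤ max (K₁:ℝ) (K₂:ℝ) := le_max_right _ _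
      have hK1n : (0:ℝ) ≤ K₁ := K₁.coe_nonneg
      have hK2n : (0:ℝ) ≤ K₂ := K₂.coe_nonneg
      have hd : dist s t = t - s := by
        rw [Real.dist_eq, abs_of_nonpos (by linarith)]; ring
      by_cases ht : t ≤ 1/2
      · have hs : s ≤ 1/2 := le_trans hst ht
        rw [hγpos s hs, hγpos t ht, hc, hd]
        have e1 := hK₁.dist_le_mul (2*s) (2*t)
        rw [Real.dist_eq] at e1
        have habs : |2*s - 2*t| = 2*(t-s) := by
          rw [abs_of_nonpos (by linarith)]; ring
        rw [habs] at e1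
        nlinarith
      · push_neg at ht
        by_cases hs : s ≤ 1/2
        · rw [hγpos s hs, hγneg t (by linarith), hc, hd]
          have e1 := hK₁.dist_le_mul (2*s) 1
          have e2 := hK₂.dist_le_mul 0 (2*t - 1)
          rw [Real.dist_eq, abs_of_nonpos (by linarith)] at e1
          rw [Real.dist_eq, abs_of_nonpos (by linarith)] at e2
          have etr : dist (γ₁ (2*s)) (γ₂ (2*t-1))
              ≤ dist (γ₁ (2*s)) (γ₁ 1) + dist (γ₂ 0) (γ₂ (2*t-1)) := by
            rw [h11, ← h20]
            exact dist_triangle _ _ _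
          nlinarith
        · push_neg at hs
          rw [hγneg s (by linarith), hγneg t (by linarith), hc, hd]
          have e1 := hK₂.dist_le_mul (2*s-1) (2*t-1)
          rw [Real.dist_eq] at e1
          have habs : |(2*s-1) - (2*t-1)| = 2*(t-s) := by
            rw [abs_of_nonpos (by linarith)]; ring
          rw [habs] at e1
          nlinarith
    intro s t
    rcases le_total s t with h | h
    · exact key s t h
    · rw [dist_comm, dist_comm s t]; exact key t s h
  refine ⟨γ, ⟨2 * max K₁ K₂, hlip⟩, ?_, ?_, ?_⟩
  · rw [hγpos 0 (by norm_num)]; norm_num [h10]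
  · rw [hγneg 1 (by norm_num)]; norm_num [h21]
  · have hI : ∀ u v : ℝ, IntervalIntegrable (fun s => f (γ s) * ‖deriv γ s‖) volume u v :=
      fun u v => integrand_II hb0 hb1 hopen hlip u v
    have hsplit : ∫ s in (0:ℝ)..1, f (γ s) * ‖deriv γ s‖
        = (∫ s in (0:ℝ)..(1/2), f (γ s) * ‖deriv γ s‖)
          + ∫ s in (1/2:ℝ)..1, f (γ s) * ‖deriv γ s‖ :=
      (intervalIntegral.integral_add_adjacent_intervals (hI 0 (1/2)) (hI (1/2) 1)).symm
    have hfst : ∫ s in (0:ℝ)..(1/2), f (γ s) * ‖deriv γ s‖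
        = ∫ s in (0:ℝ)..(1/2), (fun u => 2 * (f (γ₁ u) * ‖deriv γ₁ u‖)) (2*s) := by
      apply intervalIntegral.integral_congr_ae
      have hae : ∀ᵐ s : ℝ, s ≠ 1/2 := by
        rw [ae_iff]
        simp only [not_not, Set.setOf_eq_eq_singleton]
        exact measure_singleton _
      filter_upwards [hae] with s hs hmem
      rw [Set.uIoc_of_le (by norm_num : (0:ℝ) ≤ 1/2)] at hmem
      have hslt : s < 1/2 := lt_of_le_of_ne hmem.2 hs
      have hev : γ =ᶠ[nhds s] (fun t => γ₁ (2*t)) := by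
        filter_upwards [eventually_lt_nhds hslt] with t ht
        exact hγpos t ht.le
      have heq2 : (fun t => γ₁ (2*t)) = fun t => γ₁ (2*t + 0) := by
        funext t; norm_num
      have hder : ‖deriv γ s‖ = 2 * ‖deriv γ₁ (2*s)‖ := by
        rw [hev.deriv_eq, heq2, norm_deriv_comp_affine γ₁ 2 0 s (by norm_num)]
        norm_num
      rw [hγpos s hslt.le, hder]
      ring
    have hfst2 : ∫ s in (0:ℝ)..(1/2), (fun u => 2 * (f (γ₁ u) * ‖deriv γ₁ u‖)) (2*s)
        = ∫ s in (0:ℝ)..1, f (γ₁ s) * ‖deriv γ₁ s‖ := by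
      rw [intervalIntegral.integral_comp_mul_left (fun u => 2 * (f (γ₁ u) * ‖deriv γ₁ u‖))
        (by norm_num : (2:ℝ) ≠ 0)]
      norm_num
      ring
    have hsnd : ∫ s in (1/2:ℝ)..1, f (γ s) * ‖deriv γ s‖
        = ∫ s in (1/2:ℝ)..1, (fun u => 2 * (f (γ₂ u) * ‖deriv γ₂ u‖)) (2*s - 1) := by
      apply intervalIntegral.integral_congr_ae
      filter_upwards with s hmem
      rw [Set.uIoc_of_le (by norm_num : (1/2:ℝ) ≤ 1)] at hmem
      have hsgt : 1/2 < s := hmem.1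
      have hev : γ =ᶠ[nhds s] (fun t => γ₂ (2*t - 1)) := by
        filter_upwards [eventually_gt_nhds hsgt] with t ht
        exact hγneg t (not_le.mpr ht)
      have heq2 : (fun t => γ₂ (2*t - 1)) = fun t => γ₂ (2*t + (-1)) := by
        funext t; rw [sub_eq_add_neg]
      have hder : ‖deriv γ s‖ = 2 * ‖deriv γ₂ (2*s - 1)‖ := by
        rw [hev.deriv_eq, heq2, norm_deriv_comp_affine γ₂ 2 (-1) s (by norm_num)]
        rw [show 2*s + (-1) = 2*s - 1 by ring]
        norm_num
      rw [hγneg s (not_le.mpr hsgt), hder]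
      ring
    have hsnd2 : ∫ s in (1/2:ℝ)..1, (fun u => 2 * (f (γ₂ u) * ‖deriv γ₂ u‖)) (2*s - 1)
        = ∫ s in (0:ℝ)..1, f (γ₂ s) * ‖deriv γ₂ s‖ := by
      rw [intervalIntegral.integral_comp_mul_sub (fun u => 2 * (f (γ₂ u) * ‖deriv γ₂ u‖))
        (by norm_num : (2:ℝ) ≠ 0) 1]
      norm_num
      ring
    rw [hsplit, hfst, hfst2, hsnd, hsnd2]

lemma wdist_triangle {b : ℝ} (hb0 : 0 ≤ b) (hb1 : b ≤ 1) {ω : Set E3} (hopen : IsOpen ω)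
    (x z y : E3) :
    wdist (fun w => (aFun b ω w)^2) x y ≤
      wdist (fun w => (aFun b ω w)^2) x z + wdist (fun w => (aFun b ω w)^2) z y := by
  set f : E3 → ℝ := fun w => (aFun b ω w)^2 with hf
  have hf0 : ∀ w, 0 ≤ f w := fun w => sq_nonneg _
  have key : ∀ L₁ ∈ curveSet f x z, ∀ L₂ ∈ curveSet f z y, wdist f x y ≤ L₁ + L₂ := by
    intro L₁ h₁ L₂ h₂
    rw [wdist_eq]
    exact csInf_le (bddBelow_curveSet hf0 x y) (concat_mem hb0 hb1 hopen x z y h₁ h₂)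
  have h1 : wdist f x y - wdist f z y ≤ sInf (curveSet f x z) := by
    apply le_csInf (curveSet_nonempty f x z)
    intro L₁ hL₁
    have h2 : wdist f x y - L₁ ≤ sInf (curveSet f z y) := by
      apply le_csInf (curveSet_nonempty f z y)
      intro L₂ hL₂
      have := key L₁ hL₁ L₂ hL₂
      linarith
    rw [← wdist_eq] at h2
    linarith
  rw [← wdist_eq] at h1
  linarith

/-- If `x₀` is not on any geodesic joining `x` and `y` in `(ℝ³, d_{a²})`, then
for all small enough `r`, `d_{a²}^{B̄(x₀,r)}(x,y) = d_{a²}(x,y)`. -/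
theorem stmt_12 (b : ℝ) (hb : 0 < b) (hb1 : b < 1) (ω : Set E3)
    (hconv : StrictConvex ℝ ω) (hopen : IsOpen ω) (hbdd : Bornology.IsBounded ω)
    (x₀ x y : E3) (hxy : x ≠ y) (hx : x₀ ≠ x) (hy : x₀ ≠ y)
    (hnotgeo : wdist (fun z => (aFun b ω z)^2) x y ≠
      wdist (fun z => (aFun b ω z)^2) x x₀ + wdist (fun z => (aFun b ω z)^2) x₀ y) :
    ∃ r₀ > (0:ℝ), ∀ r : ℝ, 0 < r → r < r₀ →
      wdistK (fun z => (aFun b ω z)^2) (Metric.closedBall x₀ r) x y =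
        wdist (fun z => (aFun b ω z)^2) x y := by
  have hb0 : (0:ℝ) ≤ b := hb.le
  have hb1' : b ≤ 1 := hb1.le
  set f : E3 → ℝ := fun z => (aFun b ω z)^2 with hf
  have hf0 : ∀ z, 0 ≤ f z := fun z => sq_nonneg _
  have tri := wdist_triangle hb0 hb1' hopen x x₀ y
  have hgap : 0 < wdist f x x₀ + wdist f x₀ y - wdist f x y := by
    rcases lt_or_eq_of_le tri with h | h
    · linarith
    · exact absurd h hnotgeo
  set η := wdist f x x₀ + wdist f x₀ y - wdist f x y with hη
  refine ⟨η/2, by linarith, ?_⟩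
  intro r hr0 hrη
  unfold wdistK
  apply min_eq_left
  have hball : (Metric.closedBall x₀ r).Nonempty := ⟨x₀, Metric.mem_closedBall_self hr0.le⟩
  have hSx : wdist f x x₀ - r ≤ wdistSet f x (Metric.closedBall x₀ r) := by
    unfold wdistSet
    apply le_csInf (hball.image _)
    rintro L ⟨w, hw, rfl⟩
    have h1 : wdist f x x₀ ≤ wdist f x w + wdist f w x₀ :=
      wdist_triangle hb0 hb1' hopen x w x₀
    have h2 : wdist f w x₀ ≤ dist w x₀ := wdist_le_dist hb0 hb1' hopen w x₀
    have h3 : dist w x₀ ≤ r := Metric.mem_closedBall.mp hw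
    linarith
  have hSy : wdist f x₀ y - r ≤ wdistSet f y (Metric.closedBall x₀ r) := by
    unfold wdistSet
    apply le_csInf (hball.image _)
    rintro L ⟨w, hw, rfl⟩
    have h1 : wdist f x₀ y ≤ wdist f x₀ w + wdist f w y :=
      wdist_triangle hb0 hb1' hopen x₀ w y
    have h1b : wdist f w y = wdist f y w := wdist_symm hf0 w y
    have h2 : wdist f x₀ w ≤ dist x₀ w := wdist_le_dist hb0 hb1' hopen x₀ w
    have h3 : dist x₀ w ≤ r := by rw [dist_comm]; exact Metric.mem_closedBall.mp hw
    linarith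
  linarith

end
end

section
/- Let U : ℝ³ → [b,1] be radially symmetric (U(x) = u(|x|) for some u) and nondecreasing in the radius, with b ∈ (0,1). Fix p = (1,0,0), n = (−1,0,0). Define ξ₀(s) = ∫_{x₀}^{s} U(t,0,0)² dt for s ∈ [−1,1] and a fixed x₀ ∈ (−1,1). Then ξ₀(1) − ξ₀(−1) = d_{U²}(p,n), where d_{U²} is the weighted geodesic distance with weight U²; that is, the straight segment [n,p] is a geodesic for d_{U²} and its U²-length is ∫_{−1}^{1} U(t,0,0)² dt. -/
open MeasureTheory Pointwise
open intervalIntegral Filter Topology Metric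

noncomputable section

set_option maxHeartbeats 1000000 in
/-- Fundamental theorem of calculus for Lipschitz functions on `[0,1]`. -/
private lemma lipschitz_integral_deriv' {K : NNReal} {f : ℝ → ℝ} (hf : LipschitzWith K f) :
    ∫ s in (0:ℝ)..1, deriv f s = f 1 - f 0 := by
  have hcont : Continuous f := hf.continuous
  have hfi : ∀ a b : ℝ, IntervalIntegrable f volume a b := fun a b =>
    hcont.intervalIntegrable a b
  set ε : ℕ → ℝ := fun n => ((n : ℝ) + 1)⁻¹ with hε
  have hεpos : ∀ n, 0 < ε n := fun n => by positivity
  have hεlim : Tendsto ε atTop (𝓝 0) := by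
    simpa [hε, one_div] using (tendsto_one_div_add_atTop_nhds_zero_nat :
      Tendsto (fun n : ℕ => 1 / ((n : ℝ) + 1)) atTop (𝓝 0))
  have hεlim' : Tendsto ε atTop (𝓝[≠] (0:ℝ)) :=
    tendsto_nhdsWithin_of_tendsto_nhds_of_eventually_within _ hεlim
      (Eventually.of_forall fun n => (hεpos n).ne')
  set F : ℕ → ℝ → ℝ := fun n s => (ε n)⁻¹ * (f (s + ε n) - f s) with hF
  -- pointwise convergence a.e.
  have hlim : ∀ᵐ s : ℝ, Tendsto (fun n => F n s) atTop (𝓝 (deriv f s)) := by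
    filter_upwards [hf.ae_differentiableAt (μ := volume)] with s hs
    have h1 : Tendsto (fun t : ℝ => t⁻¹ • (f (s + t) - f s)) (𝓝[≠] (0:ℝ))
        (𝓝 (deriv f s)) := hasDerivAt_iff_tendsto_slope_zero.1 hs.hasDerivAt
    simpa [hF, Function.comp_def] using h1.comp hεlim'
  -- dominated convergence
  have hmeasF : ∀ n, Continuous (F n) := fun n =>
    continuous_const.mul ((hcont.comp (continuous_id.add continuous_const)).sub hcont)
  have hbound : ∀ n, ∀ s : ℝ, |F n s| ≤ (K : ℝ) := by
    intro n s
    have h1 : |f (s + ε n) - f s| ≤ (K : ℝ) * (ε n) := by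
      have := hf.dist_le_mul (s + ε n) s
      simpa [Real.dist_eq, abs_of_pos (hεpos n)] using this
    have h2 : |F n s| = (ε n)⁻¹ * |f (s + ε n) - f s| := by
      rw [hF]; rw [abs_mul, abs_of_pos (by positivity : (0:ℝ) < (ε n)⁻¹)]
    rw [h2]
    calc (ε n)⁻¹ * |f (s + ε n) - f s| ≤ (ε n)⁻¹ * ((K:ℝ) * ε n) := by
          apply mul_le_mul_of_nonneg_left h1 (by positivity)
      _ = (K : ℝ) := by
          rw [mul_comm (K:ℝ), ← mul_assoc, inv_mul_cancel₀ (hεpos n).ne', one_mul]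
  have hDCT : Tendsto (fun n => ∫ s in (0:ℝ)..1, F n s) atTop
      (𝓝 (∫ s in (0:ℝ)..1, deriv f s)) := by
    apply intervalIntegral.tendsto_integral_filter_of_dominated_convergence (fun _ => (K:ℝ))
    · exact Eventually.of_forall fun n => (hmeasF n).aestronglyMeasurable.restrict
    · exact Eventually.of_forall fun n =>
        Eventually.of_forall fun s _ => by simpa using hbound n s
    · exact intervalIntegrable_const
    · exact (hlim.mono fun s hs _ => hs)
  -- compute the integrals of F n
  have hcomp : ∀ n, ∫ s in (0:ℝ)..1, F n s =
      (ε n)⁻¹ * ((∫ t in (1:ℝ)..(1 + ε n), f t) - ∫ t in (0:ℝ)..(ε n), f t) := by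
    intro n
    have h1 : ∫ s in (0:ℝ)..1, F n s
        = (ε n)⁻¹ * ∫ s in (0:ℝ)..1, (f (s + ε n) - f s) := by
      rw [hF]; exact intervalIntegral.integral_const_mul _ _
    have h2 : ∫ s in (0:ℝ)..1, (f (s + ε n) - f s)
        = (∫ s in (0:ℝ)..1, f (s + ε n)) - ∫ s in (0:ℝ)..1, f s := by
      apply intervalIntegral.integral_sub
      · exact (hcont.comp (continuous_add_right (ε n))).intervalIntegrable 0 1
      · exact hfi 0 1
    have h3 : (∫ s in (0:ℝ)..1, f (s + ε n)) = ∫ t in (ε n)..(1 + ε n), f t := by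
      simpa [zero_add, add_comm] using intervalIntegral.integral_comp_add_right (a := (0:ℝ))
        (b := 1) f (ε n)
    have h4 : (∫ t in (ε n)..(1 + ε n), f t) - ∫ s in (0:ℝ)..1, f s
        = (∫ t in (1:ℝ)..(1 + ε n), f t) - ∫ t in (0:ℝ)..(ε n), f t := by
      have A : (∫ t in (ε n)..(1:ℝ), f t) + (∫ t in (1:ℝ)..(1 + ε n), f t)
          = ∫ t in (ε n)..(1 + ε n), f t :=
        intervalIntegral.integral_add_adjacent_intervals (hfi _ _) (hfi _ _)
      have B : (∫ t in (0:ℝ)..(ε n), f t) + (∫ t in (ε n)..(1:ℝ), f t)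
          = ∫ t in (0:ℝ)..(1:ℝ), f t :=
        intervalIntegral.integral_add_adjacent_intervals (hfi _ _) (hfi _ _)
      linarith
    rw [h1, h2, h3, h4]
  -- limit of the right-hand side
  have hright : ∀ c : ℝ, Tendsto (fun n => (ε n)⁻¹ * ∫ t in c..(c + ε n), f t)
      atTop (𝓝 (f c)) := by
    intro c
    have hG : HasDerivAt (fun u => ∫ t in c..u, f t) (f c) c :=
      intervalIntegral.integral_hasDerivAt_right (hfi c c)
        hcont.stronglyMeasurable.stronglyMeasurableAtFilter hcont.continuousAt
    have h1 := hasDerivAt_iff_tendsto_slope_zero.1 hG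
    have h2 := h1.comp hεlim'
    simpa [Function.comp_def, intervalIntegral.integral_same] using h2
  have hlim2 : Tendsto (fun n => ∫ s in (0:ℝ)..1, F n s) atTop (𝓝 (f 1 - f 0)) := by
    simp only [hcomp, mul_sub]
    exact ((hright 1).sub (by simpa using hright 0))
  exact tendsto_nhds_unique hDCT hlim2

private lemma countable_level_deriv_ne' (g : ℝ → ℝ) (c : ℝ) :
    {s : ℝ | g s = c ∧ DifferentiableAt ℝ g s ∧ deriv g s ≠ 0}.Countable := by
  set A := {s : ℝ | g s = c ∧ DifferentiableAt ℝ g s ∧ deriv g s ≠ 0} with hA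
  have hiso : ∀ s ∈ A, ∃ ε > 0, ∀ t ∈ A, |t - s| < ε → t = s := by
    rintro s ⟨hgs, hdiff, hne⟩
    have h1 : ∀ᶠ t in 𝓝[≠] s, g t ≠ g s := hdiff.hasDerivAt.eventually_ne hne
    rw [eventually_nhdsWithin_iff] at h1
    rcases Metric.eventually_nhds_iff.1 h1 with ⟨ε, hε, hball⟩
    refine ⟨ε, hε, fun t ht hts => ?_⟩
    by_contra hne'
    exact (hball (by simpa [Real.dist_eq] using hts) hne') (ht.1.trans hgs.symm)
  classical
  choose! r hr0 hr using hiso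
  apply Set.PairwiseDisjoint.countable_of_isOpen
    (s := fun x => Metric.ball x (r x / 2))
  · intro x hx y hy hxy
    simp only [Function.onFun]
    rw [Set.disjoint_left]
    intro z hzx hzy
    simp only [Metric.mem_ball, Real.dist_eq] at hzx hzy
    have htri : |y - x| ≤ |y - z| + |z - x| := abs_sub_le y z x
    rw [abs_sub_comm z y] at hzy
    rcases le_total (r x) (r y) with h | h
    · exact hxy (hr y hy x hx (by rw [abs_sub_comm]; linarith))
    · exact hxy ((hr x hx y hy (by linarith)).symm)
  · exact fun x _ => Metric.isOpen_ball
  · exact fun x hx => Metric.nonempty_ball.2 (by linarith [hr0 x hx])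

private lemma bdd_meas_intervalIntegrable' {f : ℝ → ℝ} (hf : Measurable f) {C : ℝ}
    (hC : ∀ t, |f t| ≤ C) (a b : ℝ) : IntervalIntegrable f volume a b := by
  rw [intervalIntegrable_iff]
  apply Measure.integrableOn_of_bounded (M := C) _ hf.aestronglyMeasurable
  · exact Eventually.of_forall fun t => by simpa [Real.norm_eq_abs] using hC t
  · exact measure_Ioc_lt_top.ne

set_option maxHeartbeats 1000000 in
private lemma key_lower' {K : NNReal} {w : ℝ → ℝ} (hwmeas : Measurable w)
    (hw0 : ∀ t, 0 ≤ w t) (hw1 : ∀ t, w t ≤ 1)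
    (hwsymm : ∀ t, w (-t) = w t) (hwmono : MonotoneOn w (Set.Ici 0))
    {g : ℝ → ℝ} (hg : LipschitzWith K g) (hg0 : g 0 = 1) (hg1 : g 1 = -1) :
    (∫ t in (-1:ℝ)..1, w t) ≤ ∫ s in (0:ℝ)..1, w (g s) * |deriv g s| := by
  have hwint : ∀ a b : ℝ, IntervalIntegrable w volume a b :=
    bdd_meas_intervalIntegrable' hwmeas
      (fun t => by rw [abs_of_nonneg (hw0 t)]; exact hw1 t)
  set ξ : ℝ → ℝ := fun x => ∫ t in (0:ℝ)..x, w t with hξ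
  have hξd : ∀ x y : ℝ, ξ x - ξ y = ∫ t in y..x, w t := fun x y =>
    integral_interval_sub_left (hwint 0 x) (hwint 0 y)
  have hξlip : LipschitzWith 1 ξ := by
    apply LipschitzWith.of_dist_le_mul
    intro x y
    rw [Real.dist_eq, Real.dist_eq, hξd]
    simpa using intervalIntegral.norm_integral_le_of_norm_le_const
      (C := 1) (f := w) (a := y) (b := x)
      (fun t _ => by rw [Real.norm_eq_abs, abs_of_nonneg (hw0 t)]; exact hw1 t)
  set h : ℝ → ℝ := fun s => ξ (g s) with hh
  have hhlip : LipschitzWith (1 * K) h := hξlip.comp hg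
  have hFTC : ∫ s in (0:ℝ)..1, deriv h s = h 1 - h 0 := lipschitz_integral_deriv' hhlip
  -- the countable "bad" set
  set m : ℝ → ℝ := fun t => w (max t 0) with hm
  have hmmono : Monotone m := fun s t hst =>
    hwmono (Set.mem_Ici.2 (le_max_right s 0)) (Set.mem_Ici.2 (le_max_right t 0))
      (max_le_max hst le_rfl)
  have hD0 : {x : ℝ | ¬ContinuousAt m x}.Countable := hmmono.countable_not_continuousAt
  set D : Set ℝ := {x : ℝ | ¬ContinuousAt m x} ∪ (Neg.neg '' {x : ℝ | ¬ContinuousAt m x})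
    with hD
  have hDc : D.Countable := hD0.union (hD0.image _)
  have hw_eq : ∀ t : ℝ, w t = m |t| := by
    intro t
    rcases le_total 0 t with ht | ht
    · simp [hm, abs_of_nonneg ht, max_eq_left ht]
    · rw [hm]; simp only [max_eq_left (abs_nonneg t)]
      rw [abs_of_nonpos ht, ← hwsymm t]
  have hwcont : ∀ c : ℝ, c ∉ D → ContinuousAt w c := by
    intro c hc
    have h1 : |c| ∉ {x : ℝ | ¬ContinuousAt m x} := by
      intro habs
      rcases le_total 0 c with h2 | h2
      · exact hc (Or.inl (by rwa [abs_of_nonneg h2] at habs))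
      · refine hc (Or.inr ⟨|c|, habs, ?_⟩)
        rw [abs_of_nonpos h2, neg_neg]
    have h2 : ContinuousAt m |c| := not_not.1 h1
    have h3 : ContinuousAt (fun t => m |t|) c := h2.comp continuous_abs.continuousAt
    exact h3.congr (Eventually.of_forall fun t => (hw_eq t).symm)
  set B : Set ℝ := ⋃ c ∈ D, {s : ℝ | g s = c ∧ DifferentiableAt ℝ g s ∧ deriv g s ≠ 0} with hB
  have hBc : B.Countable := hDc.biUnion fun c _ => countable_level_deriv_ne' g c
  have hae : (fun s => |deriv h s|) ≤ᵐ[volume] fun s => w (g s) * |deriv g s| := by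
    filter_upwards [hg.ae_differentiableAt (μ := volume), hBc.ae_notMem volume]
      with s hdiff hsB
    by_cases hc : ContinuousAt w (g s)
    · have hξder : HasDerivAt ξ (w (g s)) (g s) :=
        intervalIntegral.integral_hasDerivAt_right (hwint 0 (g s))
          hwmeas.stronglyMeasurable.stronglyMeasurableAtFilter hc
      have hhd : HasDerivAt h (w (g s) * deriv g s) s :=
        HasDerivAt.comp s hξder hdiff.hasDerivAt
      rw [hhd.deriv, abs_mul, abs_of_nonneg (hw0 _)]
    · have hgsD : g s ∈ D := by_contra fun hcon => hc (hwcont _ hcon)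
      have hderiv0 : deriv g s = 0 := by
        by_contra hne
        exact hsB (Set.mem_biUnion hgsD ⟨rfl, hdiff, hne⟩)
      have hgd0 : HasDerivAt g 0 s := by simpa [hderiv0] using hdiff.hasDerivAt
      have hhd0 : HasDerivAt h 0 s := by
        rw [hasDerivAt_iff_tendsto] at hgd0 ⊢
        refine squeeze_zero (fun t => by positivity) (fun t => ?_) hgd0
        have hle : ‖h t - h s‖ ≤ ‖g t - g s‖ := by
          have := hξlip.dist_le_mul (g t) (g s)
          simpa [Real.dist_eq, Real.norm_eq_abs, hh] using this
        have h2 : ‖h t - h s - (t - s) • (0:ℝ)‖ ≤ ‖g t - g s - (t - s) • (0:ℝ)‖ := by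
          simpa using hle
        exact mul_le_mul_of_nonneg_left h2 (by positivity)
      rw [hhd0.deriv]
      simpa using mul_nonneg (hw0 _) (abs_nonneg _)
  have hKd : ∀ s, |deriv g s| ≤ (K:ℝ) := fun s => by
    simpa [Real.norm_eq_abs] using norm_deriv_le_of_lipschitz hg (x₀ := s)
  have hKh : ∀ s, |deriv h s| ≤ ((1*K : NNReal):ℝ) := fun s => by
    simpa [Real.norm_eq_abs] using norm_deriv_le_of_lipschitz hhlip (x₀ := s)
  have int1 : IntervalIntegrable (fun s => |deriv h s|) volume 0 1 :=
    bdd_meas_intervalIntegrable' (measurable_deriv h).abs (C := ((1*K:NNReal):ℝ))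
      (fun t => by rw [abs_abs]; exact hKh t) 0 1
  have int2 : IntervalIntegrable (fun s => w (g s) * |deriv g s|) volume 0 1 :=
    bdd_meas_intervalIntegrable'
      ((hwmeas.comp hg.continuous.measurable).mul (measurable_deriv g).abs)
      (C := (K:ℝ)) (fun t => by
        simp only [Pi.mul_apply, Function.comp_apply, abs_mul, abs_abs]
        rw [abs_of_nonneg (hw0 _)]
        calc w (g t) * |deriv g t| ≤ 1 * (K:ℝ) :=
              mul_le_mul (hw1 _) (hKd t) (abs_nonneg _) one_pos.le
          _ = (K:ℝ) := one_mul _) 0 1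
  have hmono1 : (∫ s in (0:ℝ)..1, |deriv h s|) ≤ ∫ s in (0:ℝ)..1, w (g s) * |deriv g s| :=
    intervalIntegral.integral_mono_ae (by norm_num) int1 int2 hae
  have habs : |∫ s in (0:ℝ)..1, deriv h s| ≤ ∫ s in (0:ℝ)..1, |deriv h s| :=
    intervalIntegral.abs_integral_le_integral_abs (by norm_num)
  have hh0 : h 0 = ξ 1 := by rw [hh]; simp [hg0]
  have hh1 : h 1 = ξ (-1) := by rw [hh]; simp [hg1]
  have hstep : (∫ t in (-1:ℝ)..1, w t) = h 0 - h 1 := by rw [hh0, hh1, hξd]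
  rw [hstep]
  have hfin : h 0 - h 1 ≤ |∫ s in (0:ℝ)..1, deriv h s| := by
    rw [hFTC, abs_sub_comm]
    exact le_abs_self _
  linarith

/-- The point `p = (1,0,0)` of `ℝ³`. -/
noncomputable def e1 : E3 := EuclideanSpace.single (0 : Fin 3) (1:ℝ)

set_option maxHeartbeats 1000000 in
/-- For a radially symmetric, radially nondecreasing weight `U² ∈ [b²,1]`, the
diameter `[n,p]` (with `p=(1,0,0)`, `n=-p`) is a geodesic for `d_{U²}`:
`d_{U²}(p,n) = ∫_{-1}^{1} U(t,0,0)² dt` (so `ξ₀(1) - ξ₀(-1) = d_{U²}(p,n)`). -/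
theorem stmt_14 (b : ℝ) (hb : 0 < b) (hb1 : b < 1)
    (U : E3 → ℝ) (hmeas : Measurable U) (hrange : ∀ x, U x ∈ Set.Icc b 1)
    (hrad : ∀ x y : E3, ‖x‖ ≤ ‖y‖ → U x ≤ U y) :
    wdist (fun x => (U x)^2) e1 (-e1) = ∫ t in (-1:ℝ)..1, (U (t • e1))^2 := by
  have hUb : ∀ x, b ≤ U x := fun x => (hrange x).1
  have hU1 : ∀ x, U x ≤ 1 := fun x => (hrange x).2
  have hU0 : ∀ x, 0 ≤ U x := fun x => le_trans hb.le (hUb x)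
  have he1 : ‖e1‖ = 1 := by simp [e1]
  have hsm : ∀ t : ℝ, ‖t • e1‖ = |t| := fun t => by
    rw [norm_smul, he1, mul_one, Real.norm_eq_abs]
  set w : ℝ → ℝ := fun t => (U (t • e1))^2 with hwdef
  have hsmul_cont : Continuous fun t : ℝ => t • e1 := continuous_id.smul continuous_const
  have hwmeas : Measurable w := (hmeas.comp hsmul_cont.measurable).pow_const 2
  have hw0 : ∀ t, 0 ≤ w t := fun t => sq_nonneg _
  have hw1 : ∀ t, w t ≤ 1 := fun t => by
    have h1 := hU1 (t • e1); have h2 := hU0 (t • e1)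
    simp only [hwdef]; nlinarith
  have hUeq : ∀ x y : E3, ‖x‖ = ‖y‖ → U x = U y := fun x y hxy =>
    le_antisymm (hrad _ _ hxy.le) (hrad _ _ hxy.ge)
  have hwsymm : ∀ t, w (-t) = w t := fun t => by
    simp only [hwdef]
    rw [hUeq ((-t) • e1) (t • e1) (by rw [hsm, hsm, abs_neg])]
  have hwmono : MonotoneOn w (Set.Ici 0) := fun s hs t ht hst => by
    have h1 : U (s • e1) ≤ U (t • e1) := hrad _ _ (by
      rw [hsm, hsm, abs_of_nonneg hs, abs_of_nonneg (le_trans hs hst)]; exact hst)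
    exact pow_le_pow_left₀ (hU0 _) h1 2
  set T : ℝ := ∫ t in (-1:ℝ)..1, w t with hT
  -- the straight segment
  set γ₀ : ℝ → E3 := fun s => (1 - 2*s) • e1 with hγ₀def
  have hlip₀ : LipschitzWith 2 γ₀ := by
    apply LipschitzWith.of_dist_le_mul
    intro s t
    rw [dist_eq_norm, hγ₀def]
    simp only
    rw [← sub_smul, hsm, Real.dist_eq,
      show (1 - 2*s) - (1 - 2*t) = (-2) * (s - t) by ring, abs_mul]
    norm_num
  have hγ₀0 : γ₀ 0 = e1 := by simp [hγ₀def]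
  have hγ₀1 : γ₀ 1 = -e1 := by
    rw [hγ₀def]; simp only
    norm_num [neg_smul, one_smul]
  have hd₀ : ∀ s, deriv γ₀ s = (-2 : ℝ) • e1 := by
    intro s
    have h1 : HasDerivAt (fun s : ℝ => 1 - 2*s) (-2) s := by
      simpa using ((hasDerivAt_id s).const_mul (2:ℝ)).const_sub 1
    exact (h1.smul_const e1).deriv
  have hseg : (∫ s in (0:ℝ)..1, (U (γ₀ s))^2 * ‖deriv γ₀ s‖) = T := by
    have hpt : ∀ s ∈ Set.uIcc (0:ℝ) 1, (U (γ₀ s))^2 * ‖deriv γ₀ s‖ = w ((-2)*s + 1) * 2 := by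
      intro s _
      rw [hd₀ s, hsm, hγ₀def]
      simp only [hwdef]
      rw [show (-2:ℝ)*s + 1 = 1 - 2*s by ring]
      norm_num
    rw [intervalIntegral.integral_congr hpt, intervalIntegral.integral_mul_const,
      intervalIntegral.integral_comp_mul_add w (by norm_num : (-2:ℝ) ≠ 0) 1]
    rw [show (-2:ℝ)*0 + 1 = 1 by norm_num, show (-2:ℝ)*1 + 1 = -1 by norm_num,
      intervalIntegral.integral_symm, ← hT, smul_eq_mul]
    ring
  have hmem : T ∈ { L : ℝ | ∃ γ : ℝ → E3, (∃ K : NNReal, LipschitzWith K γ) ∧ γ 0 = e1 ∧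
      γ 1 = -e1 ∧ L = ∫ s in (0:ℝ)..1, (fun x => (U x)^2) (γ s) * ‖deriv γ s‖ } :=
    ⟨γ₀, ⟨2, hlip₀⟩, hγ₀0, hγ₀1, hseg.symm⟩
  have hlow : ∀ L ∈ { L : ℝ | ∃ γ : ℝ → E3, (∃ K : NNReal, LipschitzWith K γ) ∧ γ 0 = e1 ∧
      γ 1 = -e1 ∧ L = ∫ s in (0:ℝ)..1, (fun x => (U x)^2) (γ s) * ‖deriv γ s‖ }, T ≤ L := by
    rintro L ⟨γ, ⟨K, hγ⟩, hγ0, hγ1, hLeq⟩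
    set g : ℝ → ℝ := fun s => (inner ℝ e1 (γ s) : ℝ) with hgdef
    have hg0 : g 0 = 1 := by
      simp only [hgdef, hγ0]
      rw [real_inner_self_eq_norm_sq, he1]; norm_num
    have hg1 : g 1 = -1 := by
      simp only [hgdef, hγ1, inner_neg_right]
      rw [real_inner_self_eq_norm_sq, he1]; norm_num
    have hglip : LipschitzWith K g := by
      apply LipschitzWith.of_dist_le_mul
      intro s t
      rw [Real.dist_eq, hgdef]
      simp only
      rw [← inner_sub_right]
      calc |(inner ℝ e1 (γ s - γ t) : ℝ)| ≤ ‖e1‖ * ‖γ s - γ t‖ := abs_real_inner_le_norm _ _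
        _ = dist (γ s) (γ t) := by rw [he1, one_mul, dist_eq_norm]
        _ ≤ K * dist s t := hγ.dist_le_mul s t
    have hkey : T ≤ ∫ s in (0:ℝ)..1, w (g s) * |deriv g s| :=
      key_lower' hwmeas hw0 hw1 hwsymm hwmono hglip hg0 hg1
    have hKγ : ∀ s, ‖deriv γ s‖ ≤ (K:ℝ) := fun s => norm_deriv_le_of_lipschitz hγ
    have hKg : ∀ s, |deriv g s| ≤ (K:ℝ) := fun s => by
      simpa [Real.norm_eq_abs] using norm_deriv_le_of_lipschitz hglip (x₀ := s)
    have intA : IntervalIntegrable (fun s => w (g s) * |deriv g s|) volume 0 1 :=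
      bdd_meas_intervalIntegrable'
        ((hwmeas.comp hglip.continuous.measurable).mul (measurable_deriv g).abs)
        (C := (K:ℝ)) (fun t => by
          simp only [Pi.mul_apply, Function.comp_apply, abs_mul, abs_abs]
          rw [abs_of_nonneg (hw0 _)]
          calc w (g t) * |deriv g t| ≤ 1 * (K:ℝ) :=
                mul_le_mul (hw1 _) (hKg t) (abs_nonneg _) one_pos.le
            _ = (K:ℝ) := one_mul _) 0 1
    have intB : IntervalIntegrable (fun s => (U (γ s))^2 * ‖deriv γ s‖) volume 0 1 :=
      bdd_meas_intervalIntegrable'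
        (((hmeas.comp hγ.continuous.measurable).pow_const 2).mul (measurable_deriv γ).norm)
        (C := (K:ℝ)) (fun t => by
          simp only [Pi.mul_apply, Function.comp_apply, abs_mul]
          rw [abs_of_nonneg (sq_nonneg (U (γ t))), abs_of_nonneg (norm_nonneg _)]
          calc (U (γ t))^2 * ‖deriv γ t‖ ≤ 1 * (K:ℝ) := by
                apply mul_le_mul _ (hKγ t) (norm_nonneg _) one_pos.le
                nlinarith [hU0 (γ t), hU1 (γ t)]
            _ = (K:ℝ) := one_mul _) 0 1
    have hmono : (∫ s in (0:ℝ)..1, w (g s) * |deriv g s|)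
        ≤ ∫ s in (0:ℝ)..1, (U (γ s))^2 * ‖deriv γ s‖ := by
      apply intervalIntegral.integral_mono_ae (by norm_num) intA intB
      filter_upwards [hγ.ae_differentiableAt (μ := volume)] with s hdiff
      have hgd : HasDerivAt g ((innerSL ℝ e1) (deriv γ s)) s :=
        by simpa [hgdef, Function.comp_def] using
          ((innerSL ℝ e1).hasFDerivAt.comp_hasDerivAt s hdiff.hasDerivAt)
      rw [hgd.deriv]
      have h1 : w (g s) ≤ (U (γ s))^2 := by
        simp only [hwdef]
        apply pow_le_pow_left₀ (hU0 _) (hrad _ _ _) 2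
        rw [hsm]
        calc |g s| ≤ ‖e1‖ * ‖γ s‖ := abs_real_inner_le_norm _ _
          _ = ‖γ s‖ := by rw [he1, one_mul]
      have h2 : |(innerSL ℝ e1) (deriv γ s)| ≤ ‖deriv γ s‖ := by
        simpa [he1] using abs_real_inner_le_norm e1 (deriv γ s)
      exact mul_le_mul h1 h2 (abs_nonneg _) (sq_nonneg _)
    rw [hLeq]
    exact le_trans hkey hmono
  show sInf _ = _
  exact le_antisymm (csInf_le ⟨T, hlow⟩ hmem) (le_csInf ⟨T, hmem⟩ hlow)

end
end
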